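/- arXiv:2110.11114 — 3 statements merged into one kernel-verified Lean document; each statement's English description precedes it below -/
import Mathlib

section
/- Let (L, v) be a discretely valued skew field, c ∈ ℝ, and v_c the associated valuation on L[t] given by v_c(Σ hᵢtⁱ) = min{v(hᵢ)+i·c}. Let h, f ∈ L[t] with deg(h) ≥ deg(f) = d, and suppose v_c(f) = v(f_d) + d·c where f_d is the leading coefficient of f. If h = q·f + r with r = 0 or deg(r) < d, then v_c(q) ≥ v_c(h) − v_c(f) and v_c(r) ≥ v_c(h). -/
/-- The valuation `v` on `L` mapped into `WithTop ℝ`. -/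
noncomputable def vR {L : Type*} (v : L → WithTop ℤ) (x : L) : WithTop ℝ :=
  (v x).map (fun n : ℤ => (n : ℝ))

/-- For `c ∈ ℝ`, the Gauss-type valuation `v_c` on `L[t]` defined by
`v_c (Σ hᵢ tⁱ) = min { v hᵢ + i·c : hᵢ ≠ 0 }`. -/
noncomputable def vc {L : Type*} [DivisionRing L] (v : L → WithTop ℤ) (c : ℝ)
    (f : Polynomial L) : WithTop ℝ :=
  f.support.inf fun i => vR v (f.coeff i) + (((i : ℝ) * c : ℝ) : WithTop ℝ)

/-! Let `i` be the largest index at which `v_c(q)` is attained. Since `f` attains `v_c(f)` at its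
leading coefficient `f_d`, the term `q_i f_d` strictly dominates the coefficient of `t^(i+d)` in
`q f`, so `v_c(q f) = v_c(q) + v_c(f)` is realised by a coefficient of degree `i + d ≥ d`. There
`h` and `q f` agree because `deg r < d`, whence `v_c(h) ≤ v_c(q) + v_c(f)`; and `r = h - q f`
gives `v_c(r) ≥ min (v_c(h), v_c(q f)) = v_c(h)`. -/

open Polynomial

/-- `v.toReal x` is definitionally `vR v x`, so the lemmas about `AddValuation` apply to `vR v`. -/
noncomputable def AddValuation.toReal {R : Type*} [Ring R] (v : AddValuation R (WithTop ℤ)) :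
    AddValuation R (WithTop ℝ) :=
  v.map (Int.castAddHom ℝ).withTopMap rfl (WithTop.monotone_map_iff.2 Int.cast_mono)

theorem WithTop.eq_zero_of_eq_add_self {α : Type*} [AddLeftCancelMonoid α] {x : WithTop α}
    (hx : x ≠ ⊤) (h : x = x + x) : x = 0 := by
  lift x to α using hx
  norm_cast at h ⊢
  exact left_eq_add.1 h

section vR

variable {R : Type*} [Ring R] (v : AddValuation R (WithTop ℤ))

@[simp]
theorem vR_zero : vR v 0 = ⊤ := v.toReal.map_zero

theorem vR_mul_add_coe_mul (x y : R) (j k : ℕ) (c : ℝ) :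
    vR v (x * y) + (((j + k : ℕ) * c : ℝ) : WithTop ℝ) =
      (vR v x + ((j * c : ℝ) : WithTop ℝ)) + (vR v y + ((k * c : ℝ) : WithTop ℝ)) := by
  rw [show vR v (x * y) = vR v x + vR v y from v.toReal.map_mul x y, Nat.cast_add, add_mul,
    WithTop.coe_add, add_add_add_comm]

end vR

section GaussValuation

variable {L : Type*} [DivisionRing L] (v : AddValuation L (WithTop ℤ)) (c : ℝ)

theorem vR_ne_top {x : L} (hx : x ≠ 0) : vR v x ≠ ⊤ :=
  v.toReal.ne_top_iff.2 hx

@[simp]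
theorem vc_zero : vc v c 0 = ⊤ := by simp [vc]

theorem vc_le_coeff (f : L[X]) (i : ℕ) :
    vc v c f ≤ vR v (f.coeff i) + ((i * c : ℝ) : WithTop ℝ) := by
  by_cases hi : i ∈ f.support
  · exact Finset.inf_le hi
  · rw [notMem_support_iff.1 hi, vR_zero, top_add]
    exact le_top

variable {v c} in
theorem le_vc {a : WithTop ℝ} {f : L[X]}
    (H : ∀ i, a ≤ vR v (f.coeff i) + ((i * c : ℝ) : WithTop ℝ)) : a ≤ vc v c f :=
  Finset.le_inf fun i _ => H i

theorem min_vc_le_vc_sub (f g : L[X]) : min (vc v c f) (vc v c g) ≤ vc v c (f - g) := by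
  refine le_vc fun i => ?_
  calc min (vc v c f) (vc v c g)
      ≤ min (vR v (f.coeff i) + ((i * c : ℝ) : WithTop ℝ))
          (vR v (g.coeff i) + ((i * c : ℝ) : WithTop ℝ)) :=
        min_le_min (vc_le_coeff v c f i) (vc_le_coeff v c g i)
    _ = min (vR v (f.coeff i)) (vR v (g.coeff i)) + ((i * c : ℝ) : WithTop ℝ) :=
        min_add_add_right _ _ _
    _ ≤ vR v ((f - g).coeff i) + ((i * c : ℝ) : WithTop ℝ) := by
        rw [coeff_sub]
        gcongr
        exact v.toReal.map_sub _ _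

theorem vc_add_vc_le_vc_mul (f g : L[X]) : vc v c f + vc v c g ≤ vc v c (f * g) := by
  refine le_vc fun n => ?_
  obtain ⟨p, hp, hmin⟩ := (Finset.HasAntidiagonal.antidiagonal n).exists_mem_eq_inf
    ⟨(0, n), by simp⟩ fun p => vR v (f.coeff p.1 * g.coeff p.2)
  rw [Finset.HasAntidiagonal.mem_antidiagonal] at hp
  calc vc v c f + vc v c g
      ≤ (vR v (f.coeff p.1) + ((p.1 * c : ℝ) : WithTop ℝ)) +
          (vR v (g.coeff p.2) + ((p.2 * c : ℝ) : WithTop ℝ)) :=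
        add_le_add (vc_le_coeff v c f p.1) (vc_le_coeff v c g p.2)
    _ = vR v (f.coeff p.1 * g.coeff p.2) + ((n * c : ℝ) : WithTop ℝ) := by
        rw [← hp, vR_mul_add_coe_mul]
    _ ≤ vR v ((f * g).coeff n) + ((n * c : ℝ) : WithTop ℝ) := by
        rw [coeff_mul, ← hmin]
        gcongr
        exact v.toReal.map_le_sum fun p hp => Finset.inf_le hp

theorem exists_greatest_index_eq_vc {q : L[X]} (hq : q ≠ 0) :
    ∃ i, q.coeff i ≠ 0 ∧ vR v (q.coeff i) + ((i * c : ℝ) : WithTop ℝ) = vc v c q ∧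
      ∀ j, i < j → vc v c q < vR v (q.coeff j) + ((j * c : ℝ) : WithTop ℝ) := by
  classical
  set S := q.support.filter fun j => vR v (q.coeff j) + ((j * c : ℝ) : WithTop ℝ) = vc v c q
  have hS : S.Nonempty := by
    obtain ⟨j, hj, hje⟩ := q.support.exists_mem_eq_inf (support_nonempty.2 hq)
      fun j => vR v (q.coeff j) + ((j * c : ℝ) : WithTop ℝ)
    exact ⟨j, Finset.mem_filter.2 ⟨hj, hje.symm⟩⟩
  obtain ⟨i, hiS, hmax⟩ := S.exists_max_image id hS
  obtain ⟨hi, hvi⟩ := Finset.mem_filter.1 hiS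
  refine ⟨i, mem_support_iff.1 hi, hvi,
    fun j hij => (vc_le_coeff v c q j).lt_of_ne fun hj => ?_⟩
  have hqj : q.coeff j ≠ 0 := by
    rintro hqj
    rw [hqj, vR_zero, top_add, ← hvi] at hj
    exact WithTop.add_ne_top.2 ⟨vR_ne_top v (mem_support_iff.1 hi), WithTop.coe_ne_top⟩ hj
  exact (hmax j (Finset.mem_filter.2 ⟨mem_support_iff.2 hqj, hj.symm⟩)).not_gt hij

theorem vR_coeff_mul_add_natDegree {q f : L[X]} (hf0 : f ≠ 0)
    (hf : vc v c f = vR v f.leadingCoeff + ((f.natDegree * c : ℝ) : WithTop ℝ))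
    {i : ℕ} (hqi : q.coeff i ≠ 0)
    (hvi : vR v (q.coeff i) + ((i * c : ℝ) : WithTop ℝ) = vc v c q)
    (hgt : ∀ j, i < j → vc v c q < vR v (q.coeff j) + ((j * c : ℝ) : WithTop ℝ)) :
    vR v ((q * f).coeff (i + f.natDegree)) = vR v (q.coeff i * f.leadingCoeff) := by
  have hlead : f.leadingCoeff ≠ 0 := leadingCoeff_ne_zero.2 hf0
  have htop : vR v (q.coeff i * f.leadingCoeff) ≠ ⊤ := vR_ne_top v (mul_ne_zero hqi hlead)
  have hother : ∀ p ∈ (Finset.HasAntidiagonal.antidiagonal (i + f.natDegree)).erase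
      (i, f.natDegree), vR v (q.coeff i * f.leadingCoeff) < vR v (q.coeff p.1 * f.coeff p.2) := by
    rintro ⟨j, k⟩ hjk
    obtain ⟨hne, hjk⟩ := Finset.mem_erase.1 hjk
    replace hjk : j + k = i + f.natDegree := Finset.HasAntidiagonal.mem_antidiagonal.1 hjk
    rcases lt_or_gt_of_ne (show j ≠ i by rintro rfl; exact hne (Prod.ext rfl (by omega)))
      with hji | hij
    · rw [coeff_eq_zero_of_natDegree_lt (by omega : f.natDegree < k), mul_zero, vR_zero]
      exact htop.lt_top
    · rw [← WithTop.add_lt_add_iff_right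
        (WithTop.coe_ne_top : (((i + f.natDegree : ℕ) * c : ℝ) : WithTop ℝ) ≠ ⊤)]
      nth_rewrite 2 [← hjk]
      rw [vR_mul_add_coe_mul, vR_mul_add_coe_mul, hvi, ← hf]
      exact WithTop.add_lt_add_of_lt_of_le
        (hf ▸ WithTop.add_ne_top.2 ⟨vR_ne_top v hlead, WithTop.coe_ne_top⟩)
        (hgt j hij) (vc_le_coeff v c f k)
  rw [coeff_mul, ← Finset.add_sum_erase _ _
    (Finset.HasAntidiagonal.mem_antidiagonal.2 rfl : (i, f.natDegree) ∈ _)]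
  exact v.toReal.map_add_eq_of_lt_left (v.toReal.map_lt_sum htop hother)

theorem exists_vR_coeff_mul_eq_vc_add_vc {f : L[X]}
    (hf : vc v c f = vR v f.leadingCoeff + ((f.natDegree * c : ℝ) : WithTop ℝ)) (q : L[X]) :
    ∃ n, f.natDegree ≤ n ∧
      vR v ((q * f).coeff n) + ((n * c : ℝ) : WithTop ℝ) = vc v c q + vc v c f := by
  rcases eq_or_ne q 0 with rfl | hq
  · exact ⟨f.natDegree, le_rfl, by simp⟩
  rcases eq_or_ne f 0 with rfl | hf0
  · exact ⟨0, le_rfl, by simp⟩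
  obtain ⟨i, hqi, hvi, hgt⟩ := exists_greatest_index_eq_vc v c hq
  refine ⟨i + f.natDegree, Nat.le_add_left _ _, ?_⟩
  rw [vR_coeff_mul_add_natDegree v c hf0 hf hqi hvi hgt, vR_mul_add_coe_mul, hvi, hf]

end GaussValuation

theorem stmt7_general {L : Type*} [DivisionRing L] (v : L → WithTop ℤ)
    (hv0 : ∀ x : L, v x = ⊤ ↔ x = 0)
    (hadd : ∀ x y : L, min (v x) (v y) ≤ v (x + y))
    (hmul : ∀ x y : L, v (x * y) = v x + v y)
    (c : ℝ) (h f q r : Polynomial L)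
    (hlead : vc v c f = vR v f.leadingCoeff + (((f.natDegree : ℝ) * c : ℝ) : WithTop ℝ))
    (heq : h = q * f + r)
    (hr : r = 0 ∨ r.degree < f.degree) :
    vc v c h ≤ vc v c q + vc v c f ∧ vc v c h ≤ vc v c r := by
  let w : AddValuation L (WithTop ℤ) := .of v ((hv0 0).2 rfl)
    (WithTop.eq_zero_of_eq_add_self ((hv0 1).not.2 one_ne_zero) (by simpa using hmul 1 1))
    hadd hmul
  obtain ⟨n, hn, hqf⟩ := exists_vR_coeff_mul_eq_vc_add_vc w c hlead q
  have hrn : r.coeff n = 0 := by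
    rcases hr with rfl | hr
    · exact coeff_zero n
    · exact coeff_eq_zero_of_degree_lt
        (hr.trans_le (degree_le_natDegree.trans (by exact_mod_cast hn)))
  have hq : vc v c h ≤ vc v c q + vc v c f :=
    calc vc v c h ≤ vR v (h.coeff n) + ((n * c : ℝ) : WithTop ℝ) := vc_le_coeff w c h n
      _ = vc v c q + vc v c f := by rw [heq, coeff_add, hrn, add_zero]; exact hqf
  refine ⟨hq, ?_⟩
  calc vc v c h = min (vc v c h) (vc v c q + vc v c f) := (min_eq_left hq).symm
    _ ≤ min (vc v c h) (vc v c (q * f)) := min_le_min_left _ (vc_add_vc_le_vc_mul w c q f)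
    _ ≤ vc v c (h - q * f) := min_vc_le_vc_sub w c h (q * f)
    _ = vc v c r := by rw [heq, add_sub_cancel_left]

/-- Bounds on the quotient and remainder of right-division with remainder:
if `deg h ≥ deg f = d`, `v_c f = v f_d + d·c` (`f_d` the leading coefficient),
and `h = q·f + r` with `r = 0` or `deg r < d`, then
`v_c q ≥ v_c h − v_c f` (stated as `v_c h ≤ v_c q + v_c f`) and `v_c r ≥ v_c h`. -/
theorem stmt7 {L : Type*} [DivisionRing L] (v : L → WithTop ℤ)
    (hv0 : ∀ x : L, v x = ⊤ ↔ x = 0)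
    (hadd : ∀ x y : L, min (v x) (v y) ≤ v (x + y))
    (hmul : ∀ x y : L, v (x * y) = v x + v y)
    (c : ℝ) (h f q r : Polynomial L)
    (hdeg : f.degree ≤ h.degree)
    (hlead : vc v c f = vR v f.leadingCoeff + (((f.natDegree : ℝ) * c : ℝ) : WithTop ℝ))
    (heq : h = q * f + r)
    (hr : r = 0 ∨ r.degree < f.degree) :
    vc v c h ≤ vc v c q + vc v c f ∧ vc v c h ≤ vc v c r :=
  stmt7_general v hv0 hadd hmul c h f q r hlead heq hr
end

section
/- Let L be a division ring with discrete valuation v, and let f, g ∈ L[t] be nonzero polynomials (t central). Then the Newton polygon of the product g·f is the concatenation of the edges of the Newton polygons of f and g, arranged in non-decreasing order of slopes; in particular, its starting point is the vector sum of the starting points of N_f and N_g, and its end point is the vector sum of the end points of N_f and N_g. -/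
/-- The valuation of a coefficient, as an extended real number. -/
noncomputable def evv {L : Type*} (v : L → WithTop ℤ) (x : L) : EReal :=
  WithTop.recTopCoe ⊤ (fun n : ℤ => ((n : ℝ) : EReal)) (v x)

/-- The Newton polygon of a polynomial `f = Σ aᵢ tⁱ`, as the lower convex hull of the
points `(i, v aᵢ)` (with `aᵢ ≠ 0`): `NP v f x` is the supremum of the values at `x`
of all affine functions lying below all of these points. -/
noncomputable def NP {L : Type*} [DivisionRing L] (v : L → WithTop ℤ)
    (f : Polynomial L) (x : ℝ) : EReal :=
  sSup {y : EReal | ∃ a b : ℝ,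
    (∀ i ∈ f.support, ((a * i + b : ℝ) : EReal) ≤ evv v (f.coeff i)) ∧
    y = ((a * x + b : ℝ) : EReal)}

/-!
The supporting line of slope `a` below the points `(i, v aᵢ)` of `f` has intercept
`intercept f a = minᵢ (v aᵢ - a i)`, and `N_f(x) = sup_a (a x + intercept f a)`. Gauss's lemma
for the weighted valuations, `intercept (g f) = intercept f + intercept g` (the minimum for `g f`
is attained at the sum of the first contact indices of `g` and `f`), gives
`N_{gf}(x₁ + x₂) ≤ N_f(x₁) + N_g(x₂)`. Conversely, for `x` between the trailing degree and the
degree of `g f`, choose a slope `A` maximising `A x + intercept (g f) A`. Comparing with nearby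
slopes shows that `x` lies between the sums of the first and of the last contact indices of `f`
and `g` at `A`, so `x = x₁ + x₂` with `x₁`, `x₂` on the contact edges of slope `A`, where the
supporting lines are the Newton polygons themselves.
-/

open Polynomial Filter Topology

namespace AddValuation

variable {L : Type*} [DivisionRing L] (v : AddValuation L (WithTop ℤ))

theorem map_sum_eq_of_lt {ι : Type*} [DecidableEq ι] {s : Finset ι} {F : ι → L} {j : ι}
    (hj : j ∈ s) (hF : ∀ i ∈ s \ {j}, v (F j) < v (F i)) :
    v (∑ i ∈ s, F i) = v (F j) :=
  Valuation.map_sum_eq_of_lt (toValuation v) hj (by simpa using hF)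

noncomputable def intVal (x : L) : ℤ := (v x).untopD 0

variable {v}

theorem coe_intVal {x : L} (hx : x ≠ 0) : (v.intVal x : WithTop ℤ) = v x := by
  rw [intVal]
  lift v x to ℤ using v.ne_top_iff.mpr hx with z
  rfl

theorem intVal_mul {x y : L} (hx : x ≠ 0) (hy : y ≠ 0) :
    v.intVal (x * y) = v.intVal x + v.intVal y := by
  rw [← WithTop.coe_inj, WithTop.coe_add, coe_intVal hx, coe_intVal hy,
    coe_intVal (mul_ne_zero hx hy), map_mul]

theorem evv_eq_intVal {x : L} (hx : x ≠ 0) : evv v x = ((v.intVal x : ℝ) : EReal) := by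
  rw [evv, ← coe_intVal hx, WithTop.recTopCoe_coe]

theorem evv_mul (x y : L) : evv v (x * y) = evv v x + evv v y := by
  rw [evv, evv, evv, map_mul]
  induction v x using WithTop.recTopCoe <;> induction v y using WithTop.recTopCoe
  · exact EReal.top_add_top.symm
  · exact (EReal.top_add_coe _).symm
  · exact (EReal.coe_add_top _).symm
  · simp only [← WithTop.coe_add, WithTop.recTopCoe_coe, Int.cast_add, EReal.coe_add]

end AddValuation

namespace NewtonPolygon

open AddValuation Finset

variable {L : Type*} [DivisionRing L] (v : AddValuation L (WithTop ℤ)) {f g : L[X]}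

/-- `intercept v hf a` is the intercept on the vertical axis of the supporting line of slope `a`
of the points `(i, v aᵢ)`. -/
noncomputable def intercept (hf : f ≠ 0) (a : ℝ) : ℝ :=
  f.support.inf' (nonempty_support_iff.mpr hf) fun i => (v.intVal (f.coeff i) : ℝ) - a * i

noncomputable def contactSet (hf : f ≠ 0) (a : ℝ) : Finset ℕ :=
  {i ∈ f.support | (v.intVal (f.coeff i) : ℝ) - a * i = intercept v hf a}

theorem intercept_le (hf : f ≠ 0) (a : ℝ) {i : ℕ} (hi : i ∈ f.support) :
    intercept v hf a ≤ v.intVal (f.coeff i) - a * i :=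
  Finset.inf'_le _ hi

theorem le_intercept (hf : f ≠ 0) {a b : ℝ}
    (h : ∀ i ∈ f.support, b ≤ v.intVal (f.coeff i) - a * i) : b ≤ intercept v hf a :=
  Finset.le_inf' _ _ h

theorem mem_contactSet {v} {hf : f ≠ 0} {a : ℝ} {i : ℕ} :
    i ∈ contactSet v hf a ↔
      i ∈ f.support ∧ (v.intVal (f.coeff i) : ℝ) - a * i = intercept v hf a :=
  Finset.mem_filter

theorem intercept_lt_of_notMem_contactSet (hf : f ≠ 0) {a : ℝ} {i : ℕ} (hi : i ∈ f.support)
    (hic : i ∉ contactSet v hf a) : intercept v hf a < v.intVal (f.coeff i) - a * i :=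
  (intercept_le v hf a hi).lt_of_ne fun h => hic (mem_contactSet.mpr ⟨hi, h.symm⟩)

theorem contactSet_nonempty (hf : f ≠ 0) (a : ℝ) : (contactSet v hf a).Nonempty := by
  obtain ⟨i, hi, he⟩ := Finset.exists_mem_eq_inf' (nonempty_support_iff.mpr hf)
    fun i => (v.intVal (f.coeff i) : ℝ) - a * i
  exact ⟨i, mem_contactSet.mpr ⟨hi, he.symm⟩⟩

noncomputable def minContact (hf : f ≠ 0) (a : ℝ) : ℕ :=
  (contactSet v hf a).min' (contactSet_nonempty v hf a)

noncomputable def maxContact (hf : f ≠ 0) (a : ℝ) : ℕ :=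
  (contactSet v hf a).max' (contactSet_nonempty v hf a)

theorem minContact_mem (hf : f ≠ 0) (a : ℝ) : minContact v hf a ∈ contactSet v hf a :=
  Finset.min'_mem _ _

theorem maxContact_mem (hf : f ≠ 0) (a : ℝ) : maxContact v hf a ∈ contactSet v hf a :=
  Finset.max'_mem _ _

theorem minContact_le_maxContact (hf : f ≠ 0) (a : ℝ) : minContact v hf a ≤ maxContact v hf a :=
  Finset.min'_le _ _ (maxContact_mem v hf a)

theorem intercept_lt_of_lt_minContact (hf : f ≠ 0) {a : ℝ} {i : ℕ} (hi : i ∈ f.support)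
    (hlt : i < minContact v hf a) : intercept v hf a < v.intVal (f.coeff i) - a * i :=
  intercept_lt_of_notMem_contactSet v hf hi fun hic => (Finset.min'_le _ _ hic).not_gt hlt

theorem exists_intVal_le_coeff_mul {i : ℕ} (hi : i ∈ (g * f).support) :
    ∃ k ∈ g.support, ∃ j ∈ f.support, k + j = i ∧
      v.intVal (g.coeff k) + v.intVal (f.coeff j) ≤ v.intVal ((g * f).coeff i) := by
  have hne := mem_support_iff.mp hi
  obtain ⟨⟨k, j⟩, hkj, hle⟩ : ∃ p ∈ antidiagonal i,
      v (g.coeff p.1 * f.coeff p.2) ≤ v ((g * f).coeff i) := by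
    by_contra! h
    exact (v.map_lt_sum (v.ne_top_iff.mpr hne) h).ne (by rw [coeff_mul])
  have hprod : g.coeff k * f.coeff j ≠ 0 := fun h0 =>
    hne (v.top_iff.mp (top_le_iff.mp (by simpa [h0] using hle)))
  obtain ⟨hk, hj⟩ := mul_ne_zero_iff.mp hprod
  refine ⟨k, mem_support_iff.mpr hk, j, mem_support_iff.mpr hj, mem_antidiagonal.mp hkj, ?_⟩
  rwa [← intVal_mul hk hj, ← WithTop.coe_le_coe, coe_intVal hprod, coe_intVal hne]

theorem intVal_add_lt_of_ne_minContact (hf : f ≠ 0) (hg : g ≠ 0) (a : ℝ) {k j : ℕ}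
    (hk : k ∈ g.support) (hj : j ∈ f.support)
    (hkj : k + j = minContact v hg a + minContact v hf a) (hne : k ≠ minContact v hg a) :
    (v.intVal (g.coeff (minContact v hg a)) + v.intVal (f.coeff (minContact v hf a)) : ℝ) <
      v.intVal (g.coeff k) + v.intVal (f.coeff j) := by
  have hk₀ := (mem_contactSet.mp (minContact_mem v hg a)).2
  have hj₀ := (mem_contactSet.mp (minContact_mem v hf a)).2
  have hkj' : a * k + a * j = a * minContact v hg a + a * minContact v hf a := by
    rw [← mul_add, ← mul_add]
    exact_mod_cast congrArg (fun n : ℕ => a * n) hkj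
  rcases hne.lt_or_gt with hlt | hgt
  · have := intercept_lt_of_lt_minContact v hg hk hlt
    have := intercept_le v hf a hj
    linarith
  · have := intercept_lt_of_lt_minContact v hf hj (a := a) (by omega)
    have := intercept_le v hg a hk
    linarith

theorem map_coeff_mul_minContact_add (hf : f ≠ 0) (hg : g ≠ 0) (a : ℝ) :
    v ((g * f).coeff (minContact v hg a + minContact v hf a)) =
      v (g.coeff (minContact v hg a) * f.coeff (minContact v hf a)) := by
  set k₀ := minContact v hg a
  set j₀ := minContact v hf a
  have hk₀ := (mem_contactSet.mp (minContact_mem v hg a)).1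
  have hj₀ := (mem_contactSet.mp (minContact_mem v hf a)).1
  have hprod₀ : g.coeff k₀ * f.coeff j₀ ≠ 0 :=
    mul_ne_zero (mem_support_iff.mp hk₀) (mem_support_iff.mp hj₀)
  rw [coeff_mul]
  refine v.map_sum_eq_of_lt (j := (k₀, j₀)) (mem_antidiagonal.mpr rfl) ?_
  rintro ⟨k, j⟩ hp
  obtain ⟨hkj, hne⟩ := mem_sdiff.mp hp
  replace hkj : k + j = k₀ + j₀ := mem_antidiagonal.mp hkj
  replace hne : ¬(k = k₀ ∧ j = j₀) := by simpa using hne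
  by_cases hprod : g.coeff k * f.coeff j = 0
  · rw [hprod, v.map_zero]
    exact WithTop.lt_top_iff_ne_top.mpr (v.ne_top_iff.mpr hprod₀)
  obtain ⟨hk, hj⟩ := mul_ne_zero_iff.mp hprod
  rw [← coe_intVal hprod, ← coe_intVal hprod₀, intVal_mul hk hj,
    intVal_mul (mem_support_iff.mp hk₀) (mem_support_iff.mp hj₀), WithTop.coe_lt_coe]
  exact_mod_cast intVal_add_lt_of_ne_minContact v hf hg a (mem_support_iff.mpr hk)
    (mem_support_iff.mpr hj) hkj fun h => hne ⟨h, by omega⟩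

theorem intercept_mul (hf : f ≠ 0) (hg : g ≠ 0) (a : ℝ) :
    intercept v (mul_ne_zero hg hf) a = intercept v hf a + intercept v hg a := by
  refine le_antisymm ?_ (le_intercept v _ fun i hi => ?_)
  · set k₀ := minContact v hg a
    set j₀ := minContact v hf a
    obtain ⟨hk₀, ek₀⟩ := mem_contactSet.mp (minContact_mem v hg a)
    obtain ⟨hj₀, ej₀⟩ := mem_contactSet.mp (minContact_mem v hf a)
    have hprod₀ : g.coeff k₀ * f.coeff j₀ ≠ 0 :=
      mul_ne_zero (mem_support_iff.mp hk₀) (mem_support_iff.mp hj₀)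
    have hcoeff := map_coeff_mul_minContact_add v hf hg a
    have hne : (g * f).coeff (k₀ + j₀) ≠ 0 := by
      rw [← v.ne_top_iff, hcoeff, v.ne_top_iff]
      exact hprod₀
    have hval : v.intVal ((g * f).coeff (k₀ + j₀)) =
        v.intVal (g.coeff k₀) + v.intVal (f.coeff j₀) := by
      rw [← intVal_mul (mem_support_iff.mp hk₀) (mem_support_iff.mp hj₀), ← WithTop.coe_inj,
        coe_intVal hne, coe_intVal hprod₀, hcoeff]
    have := intercept_le v (mul_ne_zero hg hf) a (mem_support_iff.mpr hne)
    push_cast [hval] at this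
    linarith
  · obtain ⟨k, hk, j, hj, rfl, hle⟩ := exists_intVal_le_coeff_mul v hi
    have := intercept_le v hf a hj
    have := intercept_le v hg a hk
    have hle' : (v.intVal (g.coeff k) + v.intVal (f.coeff j) : ℝ) ≤
        v.intVal ((g * f).coeff (k + j)) := by exact_mod_cast hle
    push_cast
    linarith

theorem forall_coe_le_evv_iff (hf : f ≠ 0) (a b : ℝ) :
    (∀ i ∈ f.support, ((a * i + b : ℝ) : EReal) ≤ evv v (f.coeff i)) ↔
      b ≤ intercept v hf a := by
  refine ⟨fun h => le_intercept v hf fun i hi => ?_, fun h i hi => ?_⟩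
  · have := h i hi
    rw [evv_eq_intVal (mem_support_iff.mp hi), EReal.coe_le_coe_iff] at this
    linarith
  · rw [evv_eq_intVal (mem_support_iff.mp hi), EReal.coe_le_coe_iff]
    linarith [intercept_le v hf a hi]

theorem NP_eq_iSup (hf : f ≠ 0) (x : ℝ) :
    NP v f x = ⨆ a : ℝ, ((a * x + intercept v hf a : ℝ) : EReal) := by
  refine le_antisymm (sSup_le ?_) (iSup_le fun a =>
    le_sSup ⟨a, _, (forall_coe_le_evv_iff v hf a _).mpr le_rfl, rfl⟩)
  rintro _ ⟨a, b, hab, rfl⟩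
  have := (forall_coe_le_evv_iff v hf a b).mp hab
  exact le_iSup_of_le a (EReal.coe_le_coe_iff.mpr (by linarith))

theorem coe_le_NP (hf : f ≠ 0) (x a : ℝ) :
    ((a * x + intercept v hf a : ℝ) : EReal) ≤ NP v f x :=
  (NP_eq_iSup v hf x).symm ▸ le_iSup (fun a : ℝ => ((a * x + intercept v hf a : ℝ) : EReal)) a

theorem eventually_intercept_atTop (hf : f ≠ 0) :
    ∀ᶠ a in atTop, intercept v hf a = v.intVal (f.coeff f.natDegree) - a * f.natDegree := by
  set n := f.natDegree
  have hsupp : ∀ i ∈ f.support, ∀ᶠ a in atTop,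
      (v.intVal (f.coeff n) : ℝ) - a * n ≤ v.intVal (f.coeff i) - a * i := by
    intro i hi
    filter_upwards [eventually_ge_atTop
      (((v.intVal (f.coeff n) : ℝ) - v.intVal (f.coeff i)) / (n - i))] with a ha
    rcases (le_natDegree_of_mem_supp i hi).eq_or_lt with rfl | hlt
    · rfl
    · rw [div_le_iff₀ (sub_pos.mpr (by exact_mod_cast hlt))] at ha
      linarith
  filter_upwards [(eventually_all_finset _).mpr hsupp] with a ha
  exact (intercept_le v hf a (natDegree_mem_support_of_nonzero hf)).antisymm
    (le_intercept v hf ha)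

theorem eventually_intercept_atBot (hf : f ≠ 0) :
    ∀ᶠ a in atBot, intercept v hf a =
      v.intVal (f.coeff f.natTrailingDegree) - a * f.natTrailingDegree := by
  set m := f.natTrailingDegree
  have hsupp : ∀ i ∈ f.support, ∀ᶠ a in atBot,
      (v.intVal (f.coeff m) : ℝ) - a * m ≤ v.intVal (f.coeff i) - a * i := by
    intro i hi
    filter_upwards [eventually_le_atBot
      (((v.intVal (f.coeff i) : ℝ) - v.intVal (f.coeff m)) / (i - m))] with a ha
    rcases (natTrailingDegree_le_of_mem_supp i hi).eq_or_lt with rfl | hlt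
    · rfl
    · rw [le_div_iff₀ (sub_pos.mpr (by exact_mod_cast hlt))] at ha
      linarith
  filter_upwards [(eventually_all_finset _).mpr hsupp] with a ha
  exact (intercept_le v hf a (natTrailingDegree_mem_support_of_nonzero hf)).antisymm
    (le_intercept v hf ha)

theorem NP_eq_top_of_natDegree_lt (hf : f ≠ 0) {x : ℝ} (hx : (f.natDegree : ℝ) < x) :
    NP v f x = ⊤ := by
  refine (EReal.eq_top_iff_forall_lt _).mpr fun r => ?_
  obtain ⟨a, ha, hr⟩ := ((eventually_intercept_atTop v hf).and (eventually_gt_atTop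
    ((r - v.intVal (f.coeff f.natDegree)) / (x - f.natDegree)))).exists
  rw [div_lt_iff₀ (sub_pos.mpr hx)] at hr
  refine (EReal.coe_lt_coe_iff.mpr ?_).trans_le (coe_le_NP v hf x a)
  rw [ha]
  linarith

theorem NP_eq_top_of_lt_natTrailingDegree (hf : f ≠ 0) {x : ℝ}
    (hx : x < f.natTrailingDegree) : NP v f x = ⊤ := by
  refine (EReal.eq_top_iff_forall_lt _).mpr fun r => ?_
  obtain ⟨a, ha, hr⟩ := ((eventually_intercept_atBot v hf).and (eventually_lt_atBot
    ((r - v.intVal (f.coeff f.natTrailingDegree)) / (x - f.natTrailingDegree)))).exists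
  rw [lt_div_iff_of_neg (sub_neg.mpr hx)] at hr
  refine (EReal.coe_lt_coe_iff.mpr ?_).trans_le (coe_le_NP v hf x a)
  rw [ha]
  linarith

theorem exists_forall_add_intercept_le (hf : f ≠ 0) {x : ℝ}
    (hm : (f.natTrailingDegree : ℝ) ≤ x) (hn : x ≤ f.natDegree) :
    ∃ A, ∀ a, a * x + intercept v hf a ≤ A * x + intercept v hf A := by
  obtain ⟨M, hM⟩ := (eventually_intercept_atTop v hf).exists_forall_of_atTop
  obtain ⟨M', hM'⟩ := (eventually_intercept_atBot v hf).exists_forall_of_atBot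
  have hcont : Continuous fun a => a * x + intercept v hf a :=
    (continuous_id.mul continuous_const).add
      (Continuous.finset_inf'_apply _ fun i _ => by fun_prop)
  obtain ⟨A, -, hA⟩ := isCompact_Icc.exists_isMaxOn
    (Set.nonempty_Icc.mpr (min_le_max (a := M') (b := M))) hcont.continuousOn
  have hIcc : ∀ b, min M' M ≤ b → b ≤ max M' M →
      b * x + intercept v hf b ≤ A * x + intercept v hf A := fun b h₁ h₂ => hA ⟨h₁, h₂⟩
  refine ⟨A, fun a => ?_⟩
  rcases le_or_gt a (max M' M) with hu | hu
  · rcases le_or_gt (min M' M) a with hl | hl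
    · exact hIcc a hl hu
    · have ha : a ≤ M' := hl.le.trans (min_le_left _ _)
      refine le_trans ?_ (hIcc M' (min_le_left _ _) (le_max_left _ _))
      rw [hM' a ha, hM' M' le_rfl]
      nlinarith [mul_le_mul_of_nonneg_right ha (sub_nonneg.mpr hm)]
  · have ha : M ≤ a := (le_max_right _ _).trans hu.le
    refine le_trans ?_ (hIcc M (min_le_right _ _) (le_max_right _ _))
    rw [hM a ha, hM M le_rfl]
    nlinarith [mul_le_mul_of_nonneg_right ha (sub_nonneg.mpr hn)]

theorem NP_eq_of_mem_Icc (hf : f ≠ 0) {A x : ℝ}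
    (hx : x ∈ Set.Icc (minContact v hf A : ℝ) (maxContact v hf A)) :
    NP v f x = ((A * x + intercept v hf A : ℝ) : EReal) := by
  obtain ⟨hx₁, hx₂⟩ := hx
  refine le_antisymm ?_ (coe_le_NP v hf x A)
  rw [NP_eq_iSup v hf]
  refine iSup_le fun a => EReal.coe_le_coe_iff.mpr ?_
  obtain ⟨hj, ej⟩ := mem_contactSet.mp (minContact_mem v hf A)
  obtain ⟨hj', ej'⟩ := mem_contactSet.mp (maxContact_mem v hf A)
  have h := intercept_le v hf a hj
  have h' := intercept_le v hf a hj'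
  rcases hx₁.eq_or_lt with rfl | hlt
  · linarith
  · have key := add_le_add (mul_le_mul_of_nonneg_left h (sub_nonneg.mpr hx₂))
      (mul_le_mul_of_nonneg_left h' (sub_nonneg.mpr hx₁))
    nlinarith

/-- Near `A` only the contact indices at `A` can realise `intercept v hf a`. -/
theorem eventually_intercept_ge (hf : f ≠ 0) (A : ℝ) (j : ℕ) :
    ∀ᶠ a in 𝓝 A, (∀ i ∈ contactSet v hf A, (A - a) * j ≤ (A - a) * i) →
      intercept v hf A + (A - a) * j ≤ intercept v hf a := by
  have hoff : ∀ i ∈ f.support \ contactSet v hf A, ∀ᶠ a in 𝓝 A,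
      intercept v hf A + (A - a) * j < v.intVal (f.coeff i) - a * i := by
    intro i hi
    obtain ⟨hi, hic⟩ := mem_sdiff.mp hi
    refine ContinuousAt.eventually_lt (by fun_prop) (by fun_prop) ?_
    simpa using intercept_lt_of_notMem_contactSet v hf hi hic
  filter_upwards [(eventually_all_finset _).mpr hoff] with a ha hcontact
  refine le_intercept v hf fun i hi => ?_
  by_cases hic : i ∈ contactSet v hf A
  · linarith [hcontact i hic, (mem_contactSet.mp hic).2]
  · exact (ha i (mem_sdiff.mpr ⟨hi, hic⟩)).le

theorem eventually_gt_intercept_ge (hf : f ≠ 0) (A : ℝ) :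
    ∀ᶠ a in 𝓝[>] A, intercept v hf A + (A - a) * maxContact v hf A ≤ intercept v hf a := by
  filter_upwards [nhdsWithin_le_nhds (eventually_intercept_ge v hf A (maxContact v hf A)),
    self_mem_nhdsWithin] with a ha (haA : A < a)
  exact ha fun i hi => mul_le_mul_of_nonpos_left
    (by exact_mod_cast le_max' _ i hi) (sub_nonpos.mpr haA.le)

theorem eventually_lt_intercept_ge (hf : f ≠ 0) (A : ℝ) :
    ∀ᶠ a in 𝓝[<] A, intercept v hf A + (A - a) * minContact v hf A ≤ intercept v hf a := by
  filter_upwards [nhdsWithin_le_nhds (eventually_intercept_ge v hf A (minContact v hf A)),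
    self_mem_nhdsWithin] with a ha (haA : a < A)
  exact ha fun i hi => mul_le_mul_of_nonneg_left
    (by exact_mod_cast min'_le _ i hi) (sub_nonneg.mpr haA.le)

theorem NP_mul_le (hf : f ≠ 0) (hg : g ≠ 0) (x₁ x₂ : ℝ) :
    NP v (g * f) (x₁ + x₂) ≤ NP v f x₁ + NP v g x₂ := by
  rw [NP_eq_iSup v (mul_ne_zero hg hf)]
  refine iSup_le fun a => ?_
  calc ((a * (x₁ + x₂) + intercept v (mul_ne_zero hg hf) a : ℝ) : EReal)
      = ((a * x₁ + intercept v hf a : ℝ) : EReal) + ((a * x₂ + intercept v hg a : ℝ) : EReal) := by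
        rw [← EReal.coe_add, intercept_mul v hf hg]
        ring_nf
    _ ≤ NP v f x₁ + NP v g x₂ := add_le_add (coe_le_NP v hf x₁ a) (coe_le_NP v hg x₂ a)

/-- The one-sided derivatives of `intercept v hf` at `A` are `-maxContact v hf A` and
`-minContact v hf A`, so a maximum of `a ↦ a * x + intercept (g * f) a` at `A` pins `x` down. -/
theorem mem_Icc_contact_of_forall_le (hf : f ≠ 0) (hg : g ≠ 0) {A x : ℝ}
    (hA : ∀ a, a * x + intercept v (mul_ne_zero hg hf) a ≤
      A * x + intercept v (mul_ne_zero hg hf) A) :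
    x ∈ Set.Icc (minContact v hf A + minContact v hg A : ℝ)
      (maxContact v hf A + maxContact v hg A) := by
  simp only [intercept_mul v hf hg] at hA
  constructor
  · obtain ⟨a, ⟨hfa, hga⟩, haA : a < A⟩ := (((eventually_lt_intercept_ge v hf A).and
      (eventually_lt_intercept_ge v hg A)).and self_mem_nhdsWithin).exists
    have := hA a
    refine le_of_mul_le_mul_left ?_ (sub_pos.mpr haA)
    linarith
  · obtain ⟨a, ⟨hfa, hga⟩, haA : A < a⟩ := (((eventually_gt_intercept_ge v hf A).and
      (eventually_gt_intercept_ge v hg A)).and self_mem_nhdsWithin).exists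
    have := hA a
    refine le_of_mul_le_mul_left ?_ (sub_pos.mpr haA)
    linarith

theorem exists_add_NP_le_NP_mul (hf : f ≠ 0) (hg : g ≠ 0) {x : ℝ}
    (hm : ((g * f).natTrailingDegree : ℝ) ≤ x) (hn : x ≤ (g * f).natDegree) :
    ∃ x₁ x₂, x₁ + x₂ = x ∧ NP v f x₁ + NP v g x₂ ≤ NP v (g * f) x := by
  obtain ⟨A, hA⟩ := exists_forall_add_intercept_le v (mul_ne_zero hg hf) hm hn
  obtain ⟨hlow, hhigh⟩ := mem_Icc_contact_of_forall_le v hf hg hA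
  have hf' : (minContact v hf A : ℝ) ≤ maxContact v hf A := by
    exact_mod_cast minContact_le_maxContact v hf A
  have hg' : (minContact v hg A : ℝ) ≤ maxContact v hg A := by
    exact_mod_cast minContact_le_maxContact v hg A
  set x₁ := max (minContact v hf A : ℝ) (x - maxContact v hg A)
  have h₁ : (minContact v hf A : ℝ) ≤ x₁ := le_max_left _ _
  have h₂ : x₁ ≤ maxContact v hf A := max_le hf' (by linarith)
  have h₃ : x₁ ≤ x - minContact v hg A := max_le (by linarith) (by linarith)
  have h₄ : x - maxContact v hg A ≤ x₁ := le_max_right _ _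
  clear_value x₁
  refine ⟨x₁, x - x₁, add_sub_cancel _ _, ?_⟩
  rw [NP_eq_of_mem_Icc v hf ⟨h₁, h₂⟩, NP_eq_of_mem_Icc v hg ⟨by linarith, by linarith⟩,
    ← EReal.coe_add]
  refine le_of_eq_of_le ?_ (coe_le_NP v (mul_ne_zero hg hf) x A)
  rw [intercept_mul v hf hg]
  congr 1
  ring

theorem NP_mul (hf : f ≠ 0) (hg : g ≠ 0) (x : ℝ) :
    NP v (g * f) x =
      sInf {z : EReal | ∃ x₁ x₂ : ℝ, x₁ + x₂ = x ∧ z = NP v f x₁ + NP v g x₂} := by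
  have hle : NP v (g * f) x ≤ sInf {z : EReal | ∃ x₁ x₂ : ℝ, x₁ + x₂ = x ∧
      z = NP v f x₁ + NP v g x₂} :=
    le_sInf fun _ ⟨x₁, x₂, hx, hz⟩ => hx ▸ hz ▸ NP_mul_le v hf hg x₁ x₂
  by_cases hx : ((g * f).natTrailingDegree : ℝ) ≤ x ∧ x ≤ (g * f).natDegree
  · obtain ⟨x₁, x₂, hx, hle'⟩ := exists_add_NP_le_NP_mul v hf hg hx.1 hx.2
    exact hle.antisymm (sInf_le_of_le ⟨x₁, x₂, hx, rfl⟩ hle')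
  · have htop : NP v (g * f) x = ⊤ := by
      rcases not_and_or.mp hx with h | h
      · exact NP_eq_top_of_lt_natTrailingDegree v (mul_ne_zero hg hf) (not_le.mp h)
      · exact NP_eq_top_of_natDegree_lt v (mul_ne_zero hg hf) (not_le.mp h)
    exact htop ▸ (top_le_iff.mp (htop ▸ hle)).symm

end NewtonPolygon

/-- The concatenation of the edges of `N_f` and `N_g` in order of slope is expressed as the
infimal convolution of the two lower convex hull functions. -/
theorem stmt8 {L : Type*} [DivisionRing L] (v : L → WithTop ℤ)
    (hv0 : ∀ x : L, v x = ⊤ ↔ x = 0)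
    (hadd : ∀ x y : L, min (v x) (v y) ≤ v (x + y))
    (hmul : ∀ x y : L, v (x * y) = v x + v y)
    (f g : Polynomial L) (hf : f ≠ 0) (hg : g ≠ 0) :
    (g * f).natTrailingDegree = g.natTrailingDegree + f.natTrailingDegree ∧
    evv v (g * f).trailingCoeff = evv v g.trailingCoeff + evv v f.trailingCoeff ∧
    (g * f).natDegree = g.natDegree + f.natDegree ∧
    evv v (g * f).leadingCoeff = evv v g.leadingCoeff + evv v f.leadingCoeff ∧
    (∀ x : ℝ, NP v (g * f) x =
      sInf {z : EReal | ∃ x₁ x₂ : ℝ, x₁ + x₂ = x ∧ z = NP v f x₁ + NP v g x₂}) := by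
  have hv1 : v 1 = 0 := by
    obtain ⟨z, hz⟩ := WithTop.ne_top_iff_exists.mp (mt (hv0 1).mp one_ne_zero)
    have hzz := hmul 1 1
    rw [one_mul, ← hz, ← WithTop.coe_add, WithTop.coe_inj] at hzz
    rw [← hz, show z = 0 by omega]
    rfl
  let w : AddValuation L (WithTop ℤ) := .of v ((hv0 0).mpr rfl) hv1 hadd hmul
  refine ⟨natTrailingDegree_mul hg hf, ?_, natDegree_mul hg hf, ?_, NewtonPolygon.NP_mul w hf hg⟩
  · rw [trailingCoeff_mul]
    exact AddValuation.evv_mul (v := w) _ _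
  · rw [leadingCoeff_mul]
    exact AddValuation.evv_mul (v := w) _ _
end

section
/- Let (L, v) be a complete discretely valued skew field with uniformizer σ, and let f ∈ L[t] be a monic polynomial of degree d whose Newton polygon consists of exactly one edge of slope s, with r := d·s ∈ ℕ. Let M = L[t]/fL[t] be the cyclic left L[t]-module. Then there exists an O-lattice Λ in M with σʳ tᵈ Λ = Λ; and if s > 0, Λ can be chosen with the additional property t⁻¹Λ ⊆ Λ. -/
open Polynomial

section Evv

variable {L : Type*}

theorem evv_of_eq_coe {v : L → WithTop ℤ} {x : L} {n : ℤ} (h : v x = n) :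
    evv v x = ((n : ℝ) : EReal) := by
  simp [evv, h]

theorem evv_of_eq_top {v : L → WithTop ℤ} {x : L} (h : v x = ⊤) : evv v x = ⊤ := by
  simp [evv, h]

theorem coe_le_evv_iff {v : L → WithTop ℤ} {x : L} {β : ℝ} :
    (β : EReal) ≤ evv v x ↔ ((⌈β⌉ : ℤ) : WithTop ℤ) ≤ v x := by
  cases h : v x with
  | top => simp [evv_of_eq_top h]
  | coe n => simp [evv_of_eq_coe h, Int.ceil_le]

theorem zero_le_evv_iff {v : L → WithTop ℤ} {x : L} : 0 ≤ evv v x ↔ 0 ≤ v x := by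
  simpa using coe_le_evv_iff (v := v) (x := x) (β := 0)

theorem intCast_ceil_le_evv {v : L → WithTop ℤ} {x : L} {β : ℝ} (h : (β : EReal) ≤ evv v x) :
    (((⌈β⌉ : ℤ) : ℝ) : EReal) ≤ evv v x :=
  coe_le_evv_iff.mpr (by simpa using coe_le_evv_iff.mp h)

theorem intCast_lt_evv_iff {v : L → WithTop ℤ} {x : L} {k : ℤ} :
    ((k : ℝ) : EReal) < evv v x ↔ (((k + 1 : ℤ) : ℝ) : EReal) ≤ evv v x := by
  cases h : v x with
  | top => simp [evv_of_eq_top h]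
  | coe n => simp [evv_of_eq_coe h]; norm_cast

variable [DivisionRing L] (v : AddValuation L (WithTop ℤ))

theorem evv_zero : evv v 0 = ⊤ := evv_of_eq_top v.map_zero

theorem evv_eq_top_iff {x : L} : evv v x = ⊤ ↔ x = 0 := by
  rw [← v.top_iff]
  cases h : v x with
  | top => simp [evv_of_eq_top h]
  | coe n => simp [evv_of_eq_coe h]

theorem evv_neg (x : L) : evv v (-x) = evv v x := by rw [evv, evv, v.map_neg]

theorem evv_mul (x y : L) : evv v (x * y) = evv v x + evv v y := by
  rw [evv, evv, evv, v.map_mul]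
  cases v x <;> cases v y <;> simp [← WithTop.coe_add, ← EReal.coe_add]

theorem le_evv_add {β : EReal} {x y : L} (hx : β ≤ evv v x) (hy : β ≤ evv v y) :
    β ≤ evv v (x + y) := by
  refine le_trans (le_min hx hy) ?_
  have := v.map_add x y
  rw [evv, evv, evv]
  revert this
  cases v x <;> cases v y <;> cases v (x + y) <;> simp

theorem le_evv_sub {β : EReal} {x y : L} (hx : β ≤ evv v x) (hy : β ≤ evv v y) :
    β ≤ evv v (x - y) := by
  rw [sub_eq_add_neg]
  exact le_evv_add v hx (by rwa [evv_neg])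

theorem evv_inv {x : L} (hx : x ≠ 0) : evv v x⁻¹ = -evv v x := by
  obtain ⟨n, hn⟩ := WithTop.ne_top_iff_exists.mp ((v.ne_top_iff).mpr hx)
  rw [evv_of_eq_coe hn.symm, evv_of_eq_coe (n := -n) (by rw [v.map_inv, ← hn]; rfl)]
  simp

theorem evv_zpow {σ : L} (hσ : v σ = 1) (k : ℤ) : evv v (σ ^ k) = (k : ℝ) := by
  apply evv_of_eq_coe
  cases k with
  | ofNat m => simp [v.map_pow, hσ]
  | negSucc m =>
    rw [zpow_negSucc, v.map_inv, v.map_pow, hσ]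
    simp [Int.negSucc_eq]

end Evv

section NewtonPolygon

variable {L : Type*} [DivisionRing L]

/-- Coefficientwise form of "the Newton polygon of `f` is the segment from `(0, -s deg f)` to
`(deg f, 0)`". -/
def IsPureOfSlope (v : AddValuation L (WithTop ℤ)) (f : L[X]) (s : ℝ) : Prop :=
  (∀ j : ℕ, ((s * (j - f.natDegree) : ℝ) : EReal) ≤ evv v (f.coeff j)) ∧
    evv v (f.coeff 0) ≤ ((-(s * f.natDegree) : ℝ) : EReal)

variable (v : L → WithTop ℤ) (f : L[X])

theorem NP_le_evv_coeff {i : ℕ} (hi : i ∈ f.support) : NP v f i ≤ evv v (f.coeff i) :=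
  sSup_le fun _ ⟨_, _, hline, hy⟩ => hy ▸ hline i hi

theorem le_NP {a b : ℝ} (hline : ∀ i ∈ f.support, ((a * i + b : ℝ) : EReal) ≤ evv v (f.coeff i))
    (x : ℝ) : ((a * x + b : ℝ) : EReal) ≤ NP v f x :=
  le_sSup ⟨a, b, hline, rfl⟩

/-- Otherwise `v(a₀) ≥ k + 1` by discreteness, and the line of slope `a - 1` through `(0, k + 1)`
would still lie below all points, pushing the Newton polygon above `k` at `0`. -/
theorem evv_coeff_zero_le {a : ℝ} {k : ℤ}
    (hline : ∀ i ∈ f.support, ((a * i + k : ℝ) : EReal) ≤ evv v (f.coeff i))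
    (hNP : NP v f 0 = ((k : ℝ) : EReal)) : evv v (f.coeff 0) ≤ ((k : ℝ) : EReal) := by
  by_contra hlt
  have hk₁ := intCast_lt_evv_iff.mp (not_le.mp hlt)
  have hline' : ∀ i ∈ f.support,
      (((a - 1) * i + (k + 1 : ℤ) : ℝ) : EReal) ≤ evv v (f.coeff i) := by
    intro i hi
    rcases Nat.eq_zero_or_pos i with rfl | hi₁
    · simpa using hk₁
    · refine le_trans (EReal.coe_le_coe_iff.mpr ?_) (hline i hi)
      have : (1 : ℝ) ≤ i := by exact_mod_cast hi₁
      push_cast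
      linarith
  have := le_NP v f hline' 0
  rw [hNP, EReal.coe_le_coe_iff] at this
  push_cast at this
  linarith

variable {v f}

theorem isPureOfSlope_of_NP_edge {w : AddValuation L (WithTop ℤ)} {d : ℕ} {s : ℝ}
    (hd : f.natDegree = d)
    (hedge : ∀ x ∈ Set.Icc (0 : ℝ) d, NP w f x = ((s * (x - d) : ℝ) : EReal))
    {r : ℤ} (hr : (r : ℝ) = d * s) : IsPureOfSlope w f s := by
  have hcoeff : ∀ j : ℕ, ((s * (j - d) : ℝ) : EReal) ≤ evv w (f.coeff j) := by
    intro j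
    by_cases hj : j ∈ f.support
    · have hjd : (j : ℝ) ≤ d := by exact_mod_cast hd ▸ le_natDegree_of_mem_supp j hj
      rw [← hedge j ⟨j.cast_nonneg, hjd⟩]
      exact NP_le_evv_coeff w f hj
    · rw [notMem_support_iff.mp hj, evv_zero]
      exact le_top
  rw [IsPureOfSlope, hd]
  refine ⟨hcoeff, ?_⟩
  have := evv_coeff_zero_le w f (a := s) (k := -r) (fun i _ => ?_) ?_
  · convert this using 2
    push_cast
    linarith
  · convert hcoeff i using 2
    push_cast
    linarith
  · rw [hedge 0 ⟨le_rfl, d.cast_nonneg⟩]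
    congr 1
    push_cast
    linarith

end NewtonPolygon

section WeightedLattice

variable {ι L M : Type*} [DivisionRing L] [AddCommGroup M] [Module L M]
  (v : AddValuation L (WithTop ℤ)) (e : Module.Basis ι L M)

def weightedBall (w : ι → ℝ) : Set M := {m | ∀ i, ((w i : ℝ) : EReal) ≤ evv v (e.repr m i)}

variable {v e}

theorem weightedBall_mono {w w' : ι → ℝ} (h : ∀ i, w i ≤ w' i) :
    weightedBall v e w' ⊆ weightedBall v e w :=
  fun _ hm i => (EReal.coe_le_coe_iff.mpr (h i)).trans (hm i)

theorem zero_mem_weightedBall (w : ι → ℝ) : (0 : M) ∈ weightedBall v e w := fun i => by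
  simp [evv_zero]

theorem add_mem_weightedBall {w : ι → ℝ} {m m' : M} (hm : m ∈ weightedBall v e w)
    (hm' : m' ∈ weightedBall v e w) : m + m' ∈ weightedBall v e w := fun i => by
  rw [map_add, Finsupp.add_apply]
  exact le_evv_add v (hm i) (hm' i)

theorem smul_mem_weightedBall {w : ι → ℝ} {γ : ℝ} {c : L} (hc : (γ : EReal) ≤ evv v c) {m : M}
    (hm : m ∈ weightedBall v e w) : c • m ∈ weightedBall v e (fun i => γ + w i) := fun i => by
  rw [map_smul, Finsupp.smul_apply, smul_eq_mul, evv_mul, EReal.coe_add]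
  exact add_le_add hc (hm i)

theorem zpow_smul_mem_weightedBall {σ : L} (hσ : v σ = 1) (w : ι → ℝ) (i : ι) :
    σ ^ ⌈w i⌉ • e i ∈ weightedBall v e w := fun j => by
  classical
  rw [map_smul, e.repr_self, Finsupp.smul_apply, Finsupp.single_apply]
  split_ifs with hij
  · rw [smul_eq_mul, mul_one, evv_zpow v hσ, ← hij, EReal.coe_le_coe_iff]
    exact Int.le_ceil _
  · simp [evv_zero]

variable (e) (O : Subring L) (hO : (O : Set L) = {x | 0 ≤ v x})

def weightedLattice (w : ι → ℝ) : Submodule O M where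
  carrier := weightedBall v e w
  add_mem' := add_mem_weightedBall
  zero_mem' := zero_mem_weightedBall w
  smul_mem' c m hm := by
    have hc : ((0 : ℝ) : EReal) ≤ evv v c := zero_le_evv_iff.mpr ((Set.ext_iff.mp hO c).mp c.2)
    rw [Subring.smul_def]
    simpa using smul_mem_weightedBall hc hm

theorem weightedLattice_eq_span [Fintype ι] {σ : L} (hσ : v σ = 1) (w : ι → ℝ) :
    weightedLattice e O hO w = Submodule.span O (Set.range fun i => σ ^ ⌈w i⌉ • e i) := by
  refine le_antisymm (fun m hm => ?_) (Submodule.span_le.mpr ?_)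
  · rw [← e.sum_repr m]
    refine Submodule.sum_mem _ fun i _ => ?_
    set c := e.repr m i * σ ^ (-⌈w i⌉)
    have hc : c ∈ O := by
      rw [← SetLike.mem_coe, hO, Set.mem_ofPred, ← zero_le_evv_iff, evv_mul, evv_zpow v hσ]
      calc (0 : EReal) = (((⌈w i⌉ : ℤ) : ℝ) : EReal) + (((-⌈w i⌉ : ℤ) : ℝ) : EReal) := by
            rw [← EReal.coe_add, Int.cast_neg, add_neg_cancel, EReal.coe_zero]
        _ ≤ _ := add_le_add_left (intCast_ceil_le_evv (hm i)) _
    have hσ₀ : σ ≠ 0 := by rintro rfl; simp at hσ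
    have : e.repr m i • e i = (⟨c, hc⟩ : O) • σ ^ ⌈w i⌉ • e i := by
      rw [Subring.smul_def, smul_smul, mul_assoc, ← zpow_add₀ hσ₀, neg_add_cancel, zpow_zero,
        mul_one]
    rw [this]
    exact Submodule.smul_mem _ _ (Submodule.subset_span ⟨i, rfl⟩)
  · rintro _ ⟨i, rfl⟩
    exact zpow_smul_mem_weightedBall hσ w i

theorem weightedLattice_fg [Fintype ι] {σ : L} (hσ : v σ = 1) (w : ι → ℝ) :
    (weightedLattice e O hO w).FG := by
  rw [weightedLattice_eq_span e O hO hσ w]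
  exact Submodule.fg_span (Set.finite_range _)

theorem exists_basis_forall_mem_weightedLattice {σ : L} (hσ : v σ = 1) (w : ι → ℝ) :
    ∃ b : Module.Basis ι L M, ∀ i, b i ∈ weightedLattice e O hO w := by
  have hσ₀ : σ ≠ 0 := by rintro rfl; simp at hσ
  refine ⟨e.unitsSMul fun i => Units.mk0 (σ ^ ⌈w i⌉) (zpow_ne_zero _ hσ₀), fun i => ?_⟩
  rw [Module.Basis.unitsSMul_apply]
  exact zpow_smul_mem_weightedBall hσ w i

end WeightedLattice

section CyclicModule

variable {L M : Type*} [DivisionRing L] [AddCommGroup M] [Module L[X] M]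

theorem exists_generator_of_equiv_quotient {f : L[X]}
    (hiso : Nonempty (M ≃ₗ[L[X]] L[X] ⧸ Submodule.span L[X] {f})) :
    ∃ m₀ : M, (∀ p : L[X], p • m₀ = 0 ↔ ∃ g, g * f = p) ∧ ∀ m : M, ∃ p : L[X], p • m₀ = m := by
  obtain ⟨φ⟩ := hiso
  have hmk : ∀ p : L[X], p • φ.symm (Submodule.Quotient.mk 1) =
      φ.symm (Submodule.Quotient.mk p) := by
    intro p
    rw [← map_smul, ← Submodule.Quotient.mk_smul, smul_eq_mul, mul_one]
  refine ⟨φ.symm (Submodule.Quotient.mk 1), fun p => ?_, fun m => ?_⟩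
  · rw [hmk, LinearEquiv.map_eq_zero_iff, Submodule.Quotient.mk_eq_zero,
      Submodule.mem_span_singleton]
    rfl
  · obtain ⟨p, hp⟩ := Submodule.Quotient.mk_surjective _ (φ m)
    exact ⟨p, by rw [hmk, hp, LinearEquiv.symm_apply_apply]⟩

variable [Module L M] [IsScalarTower L L[X] M]

theorem C_smul_eq_smul (a : L) (m : M) : (C a : L[X]) • m = a • m := by
  rw [← smul_one_smul L[X] a m, smul_eq_C_mul, mul_one]

theorem X_smul_comm (a : L) (m : M) : (X : L[X]) • a • m = a • (X : L[X]) • m := by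
  rw [← C_smul_eq_smul, ← C_smul_eq_smul, ← mul_smul, ← mul_smul, X_mul]

variable {f : L[X]} {n : ℕ} {m₀ : M}

theorem X_pow_smul_eq_neg_sum (hf : f.Monic) (hd : f.natDegree = n + 1) (hf₀ : f • m₀ = 0) :
    (X ^ (n + 1) : L[X]) • m₀ = -∑ j : Fin (n + 1), f.coeff j • (X ^ (j : ℕ) : L[X]) • m₀ := by
  rw [hf.as_sum, hd, add_smul, Finset.sum_smul] at hf₀
  rw [eq_neg_iff_add_eq_zero, ← hf₀,
    Fin.sum_univ_eq_sum_range (fun j => f.coeff j • (X ^ j : L[X]) • m₀)]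
  simp only [← C_smul_eq_smul, mul_smul]

theorem linearIndependent_X_pow_smul (hd : f.natDegree = n + 1)
    (hann : ∀ p : L[X], p • m₀ = 0 → ∃ g, g * f = p) :
    LinearIndependent L (fun i : Fin (n + 1) => (X ^ (i : ℕ) : L[X]) • m₀) := by
  rw [Fintype.linearIndependent_iff]
  intro c hc
  set p := (degreeLTEquiv L (n + 1)).symm c
  have hp : (p : L[X]) • m₀ = 0 := by
    rw [← hc]
    simp [p, degreeLTEquiv, Finset.sum_smul, ← C_mul_X_pow_eq_monomial, mul_smul,
      C_smul_eq_smul]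
  obtain ⟨g, hg⟩ := hann p hp
  have hg₀ : g = 0 := by
    by_contra hg₀
    have hdeg := mem_degreeLT.mp p.2
    rw [← hg, degree_mul, degree_eq_natDegree hg₀,
      degree_eq_natDegree (by rintro rfl; simp at hd), hd] at hdeg
    norm_cast at hdeg
    omega
  have : p = 0 := Subtype.ext (by rw [← hg, hg₀, zero_mul]; rfl)
  simpa [p] using congrFun (congrArg (degreeLTEquiv L (n + 1)) this)

theorem span_X_pow_smul_eq_top (hf : f.Monic) (hd : f.natDegree = n + 1) (hf₀ : f • m₀ = 0)
    (hgen : ∀ m : M, ∃ p : L[X], p • m₀ = m) :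
    Submodule.span L (Set.range fun i : Fin (n + 1) => (X ^ (i : ℕ) : L[X]) • m₀) = ⊤ := by
  set N := Submodule.span L (Set.range fun i : Fin (n + 1) => (X ^ (i : ℕ) : L[X]) • m₀)
  have hgen_mem : ∀ i : Fin (n + 1), (X ^ (i : ℕ) : L[X]) • m₀ ∈ N :=
    fun i => Submodule.subset_span ⟨i, rfl⟩
  have hX : ∀ m ∈ N, (X : L[X]) • m ∈ N := by
    intro m hm
    induction hm using Submodule.span_induction with
    | mem _ hx =>
      obtain ⟨i, rfl⟩ := hx
      rw [← mul_smul, ← pow_succ']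
      induction i using Fin.lastCases with
      | last =>
        rw [Fin.val_last, X_pow_smul_eq_neg_sum hf hd hf₀]
        exact N.neg_mem (N.sum_mem fun j _ => N.smul_mem _ (hgen_mem j))
      | cast i => exact hgen_mem i.succ
    | zero => rw [smul_zero]; exact N.zero_mem
    | add _ _ _ _ hx hy => rw [smul_add]; exact N.add_mem hx hy
    | smul a _ _ hx => rw [X_smul_comm]; exact N.smul_mem a hx
  have hpow : ∀ k : ℕ, (X ^ k : L[X]) • m₀ ∈ N := by
    intro k
    induction k with
    | zero => exact hgen_mem 0
    | succ k ih => rw [pow_succ', mul_smul]; exact hX _ ih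
  refine eq_top_iff.mpr fun m _ => ?_
  obtain ⟨p, rfl⟩ := hgen m
  rw [p.as_sum_range_C_mul_X_pow, Finset.sum_smul]
  exact N.sum_mem fun k _ => by rw [mul_smul, C_smul_eq_smul]; exact N.smul_mem _ (hpow k)

end CyclicModule

section CompanionBasis

variable {L M : Type*} [DivisionRing L] [AddCommGroup M] [Module L[X] M] [Module L M]
  [IsScalarTower L L[X] M] {f : L[X]} {n : ℕ}

def IsCompanionBasis (f : L[X]) (e : Module.Basis (Fin (n + 1)) L M) : Prop :=
  (∀ i : Fin n, (X : L[X]) • e i.castSucc = e i.succ) ∧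
    (X : L[X]) • e (Fin.last n) = -∑ j : Fin (n + 1), f.coeff j • e j

theorem exists_isCompanionBasis (hf : f.Monic) (hd : f.natDegree = n + 1)
    (hiso : Nonempty (M ≃ₗ[L[X]] L[X] ⧸ Submodule.span L[X] {f})) :
    ∃ e : Module.Basis (Fin (n + 1)) L M, IsCompanionBasis f e := by
  obtain ⟨m₀, hann, hgen⟩ := exists_generator_of_equiv_quotient hiso
  have hf₀ : f • m₀ = 0 := (hann f).mpr ⟨1, one_mul f⟩
  have hli := linearIndependent_X_pow_smul hd fun p hp => (hann p).mp hp
  have hspan := (span_X_pow_smul_eq_top hf hd hf₀ hgen).ge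
  refine ⟨Module.Basis.mk hli hspan, fun i => ?_, ?_⟩
  · simp only [Module.Basis.mk_apply, ← mul_smul, ← pow_succ', Fin.val_castSucc, Fin.val_succ]
  · simp only [Module.Basis.mk_apply, ← mul_smul, ← pow_succ', Fin.val_last]
    exact X_pow_smul_eq_neg_sum hf hd hf₀

variable {e : Module.Basis (Fin (n + 1)) L M}

theorem IsCompanionBasis.X_smul_eq_sum (he : IsCompanionBasis f e) (m : M) :
    (X : L[X]) • m = ∑ i : Fin n, e.repr m i.castSucc • e i.succ -
      e.repr m (Fin.last n) • ∑ j : Fin (n + 1), f.coeff j • e j := by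
  conv_lhs => rw [← e.sum_repr m]
  simp only [Fin.sum_univ_castSucc, smul_add, Finset.smul_sum, X_smul_comm, he.1, he.2,
    smul_neg, sub_eq_add_neg]

theorem IsCompanionBasis.repr_X_smul_zero (he : IsCompanionBasis f e) (m : M) :
    e.repr ((X : L[X]) • m) 0 = -(e.repr m (Fin.last n) * f.coeff 0) := by
  classical
  rw [he.X_smul_eq_sum]
  simp [Finsupp.single_apply, Fin.succ_ne_zero]

theorem IsCompanionBasis.repr_X_smul_succ (he : IsCompanionBasis f e) (m : M) (i : Fin n) :
    e.repr ((X : L[X]) • m) i.succ =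
      e.repr m i.castSucc - e.repr m (Fin.last n) * f.coeff (i + 1) := by
  classical
  rw [he.X_smul_eq_sum]
  simp [Finsupp.single_apply]

end CompanionBasis

namespace IsCompanionBasis

variable {L M : Type*} [DivisionRing L] [AddCommGroup M] [Module L[X] M] [Module L M]
  [IsScalarTower L L[X] M] {v : AddValuation L (WithTop ℤ)} {f : L[X]} {n : ℕ}
  {e : Module.Basis (Fin (n + 1)) L M} {s : ℝ}

theorem X_smul_mem_weightedBall (he : IsCompanionBasis f e) (hf : IsPureOfSlope v f s)
    (hd : f.natDegree = n + 1) {B : ℝ} {m : M}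
    (hm : m ∈ weightedBall v e fun i => B + s * (i : ℕ)) :
    (X : L[X]) • m ∈ weightedBall v e fun i => B - s + s * (i : ℕ) := by
  have hlast : ∀ j : ℕ,
      ((B - s + s * j : ℝ) : EReal) ≤ evv v (e.repr m (Fin.last n) * f.coeff j) := by
    intro j
    rw [evv_mul]
    refine le_trans (le_of_eq ?_) (add_le_add (hm (Fin.last n)) (hf.1 j))
    rw [← EReal.coe_add, hd]
    congr 1
    push_cast
    ring
  intro j
  cases j using Fin.cases with
  | zero =>
    rw [he.repr_X_smul_zero, evv_neg]
    simpa using hlast 0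
  | succ i =>
    rw [he.repr_X_smul_succ]
    refine le_evv_sub v (le_trans (le_of_eq ?_) (hm i.castSucc)) (by simpa using hlast (i + 1))
    congr 1
    push_cast [Fin.val_succ, Fin.val_castSucc]
    ring

theorem mem_weightedBall_of_X_smul_mem (he : IsCompanionBasis f e) (hf : IsPureOfSlope v f s)
    (hd : f.natDegree = n + 1) {B : ℝ} {m : M}
    (hm : (X : L[X]) • m ∈ weightedBall v e fun i => B + s * (i : ℕ)) :
    m ∈ weightedBall v e fun i => B + s + s * (i : ℕ) := by
  obtain ⟨hcoeff, hcoeff₀⟩ := hf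
  rw [hd] at hcoeff hcoeff₀
  have ha₀ : f.coeff 0 ≠ 0 := by
    rintro h
    rw [h, evv_zero] at hcoeff₀
    exact EReal.coe_ne_top _ (top_le_iff.mp hcoeff₀)
  have hlast : ((B + s * (n + 1 : ℕ) : ℝ) : EReal) ≤ evv v (e.repr m (Fin.last n)) := by
    rw [← mul_inv_cancel_right₀ ha₀ (e.repr m _), ← neg_neg (e.repr m _ * _),
      ← he.repr_X_smul_zero, evv_mul, evv_neg, evv_inv v ha₀, EReal.coe_add]
    exact add_le_add (by simpa using hm 0) (EReal.le_neg_of_le_neg (by simpa using hcoeff₀))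
  intro j
  cases j using Fin.lastCases with
  | last =>
    refine le_trans (le_of_eq ?_) hlast
    congr 1
    push_cast
    ring
  | cast i =>
    rw [← sub_add_cancel (e.repr m i.castSucc) (e.repr m (Fin.last n) * f.coeff (i + 1)),
      ← he.repr_X_smul_succ]
    refine le_evv_add v (le_trans (le_of_eq ?_) (hm i.succ)) ?_
    · congr 1
      push_cast [Fin.val_succ, Fin.val_castSucc]
      ring
    · rw [evv_mul]
      refine le_trans (le_of_eq ?_) (add_le_add hlast (hcoeff (i + 1)))
      rw [← EReal.coe_add]
      congr 1
      push_cast [Fin.val_castSucc]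
      ring

theorem X_pow_smul_mem_weightedBall (he : IsCompanionBasis f e) (hf : IsPureOfSlope v f s)
    (hd : f.natDegree = n + 1) {B : ℝ} {m : M}
    (hm : m ∈ weightedBall v e fun i => B + s * (i : ℕ)) (k : ℕ) :
    (X ^ k : L[X]) • m ∈ weightedBall v e fun i => B - k * s + s * (i : ℕ) := by
  induction k with
  | zero => simpa using hm
  | succ k ih =>
    rw [pow_succ', mul_smul]
    refine weightedBall_mono (fun i => le_of_eq ?_) (he.X_smul_mem_weightedBall hf hd ih)
    push_cast
    ring

theorem mem_weightedBall_of_X_pow_smul_mem (he : IsCompanionBasis f e)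
    (hf : IsPureOfSlope v f s) (hd : f.natDegree = n + 1) {B : ℝ} (k : ℕ) {m : M}
    (hm : (X ^ k : L[X]) • m ∈ weightedBall v e fun i => B + s * (i : ℕ)) :
    m ∈ weightedBall v e fun i => B + k * s + s * (i : ℕ) := by
  induction k generalizing m with
  | zero => simpa using hm
  | succ k ih =>
    rw [pow_succ, mul_smul] at hm
    refine weightedBall_mono (fun i => le_of_eq ?_)
      (he.mem_weightedBall_of_X_smul_mem hf hd (ih hm))
    push_cast
    ring

/-- `X` is injective, because `X m = 0` lies in every ball, so all coordinates of `m` have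
valuation `⊤`; hence it is bijective on the finite-dimensional space `M`. -/
theorem X_smul_surjective (he : IsCompanionBasis f e) (hf : IsPureOfSlope v f s)
    (hd : f.natDegree = n + 1) : Function.Surjective fun m : M => (X : L[X]) • m := by
  have := Module.Finite.of_basis e
  let T : M →ₗ[L] M :=
    { toFun := fun m => (X : L[X]) • m
      map_add' := smul_add _
      map_smul' := X_smul_comm }
  refine LinearMap.injective_iff_surjective.mp ((injective_iff_map_eq_zero T).mpr fun m hm => ?_)
  refine e.ext_elem fun j => ?_
  rw [map_zero, Finsupp.zero_apply, ← evv_eq_top_iff v, EReal.eq_top_iff_forall_lt]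
  intro y
  have hXm : (X : L[X]) • m ∈ weightedBall v e fun i => y + 1 - s - s * (j : ℕ) + s * (i : ℕ) := by
    rw [show (X : L[X]) • m = 0 from hm]
    exact zero_mem_weightedBall _
  refine lt_of_lt_of_le ?_ (he.mem_weightedBall_of_X_smul_mem hf hd hXm j)
  rw [EReal.coe_lt_coe_iff]
  linarith

theorem image_C_pow_mul_X_pow_smul_weightedBall (he : IsCompanionBasis f e)
    (hf : IsPureOfSlope v f s) (hd : f.natDegree = n + 1) {σ : L} (hσ : v σ = 1) {r : ℕ}
    (hr : (r : ℝ) = (n + 1 : ℕ) * s) (B : ℝ) :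
    (fun m : M => (C (σ ^ r) * X ^ (n + 1) : L[X]) • m) ''
        weightedBall v e (fun i => B + s * (i : ℕ)) =
      weightedBall v e (fun i => B + s * (i : ℕ)) := by
  have hσr : evv v (σ ^ r) = (r : ℝ) := by simpa using evv_zpow v hσ r
  have hσr₀ : σ ^ r ≠ 0 := by
    rw [ne_eq, ← evv_eq_top_iff v, hσr]
    exact EReal.coe_ne_top _
  push_cast at hr
  refine subset_antisymm ?_ fun m hm => ?_
  · rintro _ ⟨m, hm, rfl⟩
    simp only [mul_smul, C_smul_eq_smul]
    refine weightedBall_mono (fun i => le_of_eq ?_)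
      (smul_mem_weightedBall hσr.ge (he.X_pow_smul_mem_weightedBall hf hd hm (n + 1)))
    push_cast
    linarith
  · have hσr_inv : ((-r : ℝ) : EReal) ≤ evv v (σ ^ r)⁻¹ := by
      rw [evv_inv v hσr₀, hσr]
      rfl
    obtain ⟨u, hu⟩ := ((he.X_smul_surjective hf hd).iterate (n + 1)) ((σ ^ r)⁻¹ • m)
    simp only [smul_iterate] at hu
    have hXu : (X ^ (n + 1) : L[X]) • u ∈ weightedBall v e fun i => B - r + s * (i : ℕ) := by
      rw [hu]
      exact weightedBall_mono (fun i => by linarith) (smul_mem_weightedBall hσr_inv hm)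
    refine ⟨u, weightedBall_mono (fun i => le_of_eq ?_)
      (he.mem_weightedBall_of_X_pow_smul_mem hf hd (n + 1) hXu), ?_⟩
    · push_cast
      linarith
    · simp only [mul_smul, C_smul_eq_smul, hu, smul_smul, mul_inv_cancel₀ hσr₀, one_smul]

theorem weightedBall_subset_image_X_smul (he : IsCompanionBasis f e) (hf : IsPureOfSlope v f s)
    (hd : f.natDegree = n + 1) (hs : 0 ≤ s) (B : ℝ) :
    weightedBall v e (fun i => B + s * (i : ℕ)) ⊆
      (fun m : M => (X : L[X]) • m) '' weightedBall v e (fun i => B + s * (i : ℕ)) := by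
  intro m hm
  obtain ⟨u, rfl⟩ := he.X_smul_surjective hf hd m
  exact ⟨u, weightedBall_mono (fun i => by linarith) (he.mem_weightedBall_of_X_smul_mem hf hd hm),
    rfl⟩

end IsCompanionBasis

theorem stmt14_general {L M : Type*} [DivisionRing L]
    [AddCommGroup M] [Module (Polynomial L) M] [Module L M]
    (hcompat : ∀ (a : L) (m : M), a • m = (Polynomial.C a : Polynomial L) • m)
    (v : L → WithTop ℤ)
    (hv0 : ∀ x : L, v x = ⊤ ↔ x = 0)
    (hadd : ∀ x y : L, min (v x) (v y) ≤ v (x + y))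
    (hmul : ∀ x y : L, v (x * y) = v x + v y)
    (O : Subring L) (hO : (O : Set L) = {x : L | 0 ≤ v x})
    (σ : L) (hσ : v σ = 1)
    (f : Polynomial L) (hmonic : f.Monic) (d : ℕ) (hd : f.natDegree = d) (hd0 : 0 < d)
    (s : ℝ) (r : ℕ) (hr : (r : ℝ) = (d : ℝ) * s)
    (hedge : ∀ x ∈ Set.Icc (0 : ℝ) (d : ℝ), NP v f x = ((s * (x - (d : ℝ)) : ℝ) : EReal))
    (hiso : Nonempty (M ≃ₗ[Polynomial L]
      (Polynomial L ⧸ Submodule.span (Polynomial L) {f}))) :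
    (∃ Λ : Submodule ↥O M, Λ.FG ∧ (∃ (n : ℕ) (b : Module.Basis (Fin n) L M), ∀ i, b i ∈ Λ) ∧
      (fun m : M => (Polynomial.C (σ ^ r) * Polynomial.X ^ d : Polynomial L) • m) ''
        (Λ : Set M) = (Λ : Set M)) ∧
    (0 < s → ∃ Λ : Submodule ↥O M, Λ.FG ∧
      (∃ (n : ℕ) (b : Module.Basis (Fin n) L M), ∀ i, b i ∈ Λ) ∧
      (fun m : M => (Polynomial.C (σ ^ r) * Polynomial.X ^ d : Polynomial L) • m) ''
        (Λ : Set M) = (Λ : Set M) ∧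
      (Λ : Set M) ⊆ (fun m : M => (Polynomial.X : Polynomial L) • m) '' (Λ : Set M)) := by
  obtain ⟨n, rfl⟩ : ∃ n, d = n + 1 := ⟨d - 1, by omega⟩
  have : IsScalarTower L L[X] M := ⟨fun a p m => by rw [smul_eq_C_mul, mul_smul, ← hcompat]⟩
  have hv₁ : v 1 = 0 := by
    obtain ⟨k, hk⟩ := WithTop.ne_top_iff_exists.mp (mt (hv0 1).mp one_ne_zero)
    have h := hmul 1 1
    rw [mul_one, ← hk, ← WithTop.coe_add, WithTop.coe_inj] at h
    rw [← hk, show k = 0 by omega]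
    rfl
  let w : AddValuation L (WithTop ℤ) := .of v ((hv0 0).mpr rfl) hv₁ hadd hmul
  have hf : IsPureOfSlope w f s := isPureOfSlope_of_NP_edge hd hedge (r := r) (by exact_mod_cast hr)
  have hs : 0 ≤ s := by
    have : (0 : ℝ) ≤ r := r.cast_nonneg
    push_cast at hr
    nlinarith
  obtain ⟨e, he⟩ := exists_isCompanionBasis hmonic hd hiso
  let Λ := weightedLattice (v := w) e O hO fun i => s * (i : ℕ)
  have hΛ : Λ.FG ∧ ∃ (k : ℕ) (b : Module.Basis (Fin k) L M), ∀ i, b i ∈ Λ :=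
    ⟨weightedLattice_fg e O hO hσ _, _, exists_basis_forall_mem_weightedLattice e O hO hσ _⟩
  have hstable := he.image_C_pow_mul_X_pow_smul_weightedBall hf hd hσ hr 0
  have hsubset := he.weightedBall_subset_image_X_smul hf hd hs 0
  simp only [zero_add] at hstable hsubset
  exact ⟨⟨Λ, hΛ.1, hΛ.2, hstable⟩, fun _ => ⟨Λ, hΛ.1, hΛ.2, hstable, hsubset⟩⟩

/-- Existence of stable lattices: let `f ∈ L[t]` be monic of degree `d > 0` whose Newton
polygon is a single edge of slope `s` (so `N_f x = s·(x − d)` on `[0, d]`), with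
`r = d·s ∈ ℕ`, and let `M` be the cyclic left `L[t]`-module `L[t]/L[t]f`.  Then there is
an `O`-lattice `Λ` in `M` with `σʳ tᵈ Λ = Λ`; and if `s > 0` the lattice can moreover be
chosen with `t⁻¹Λ ⊆ Λ` (i.e. `Λ ⊆ tΛ`). -/
theorem stmt14 {L M : Type*} [DivisionRing L]
    [AddCommGroup M] [Module (Polynomial L) M] [Module L M]
    (hcompat : ∀ (a : L) (m : M), a • m = (Polynomial.C a : Polynomial L) • m)
    (v : L → WithTop ℤ)
    (hv0 : ∀ x : L, v x = ⊤ ↔ x = 0)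
    (hadd : ∀ x y : L, min (v x) (v y) ≤ v (x + y))
    (hmul : ∀ x y : L, v (x * y) = v x + v y)
    (hcomplete : ∀ x : ℕ → L,
      (∀ M' : ℤ, ∃ N : ℕ, ∀ n ≥ N, (M' : WithTop ℤ) ≤ v (x n)) →
      ∃ t : L, ∀ M' : ℤ, ∃ N : ℕ, ∀ n ≥ N,
        (M' : WithTop ℤ) ≤ v (t - ∑ i ∈ Finset.range n, x i))
    (O : Subring L) (hO : (O : Set L) = {x : L | 0 ≤ v x})
    (σ : L) (hσ : v σ = 1)
    (f : Polynomial L) (hmonic : f.Monic) (d : ℕ) (hd : f.natDegree = d) (hd0 : 0 < d)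
    (s : ℝ) (r : ℕ) (hr : (r : ℝ) = (d : ℝ) * s)
    (hedge : ∀ x ∈ Set.Icc (0 : ℝ) (d : ℝ), NP v f x = ((s * (x - (d : ℝ)) : ℝ) : EReal))
    (hiso : Nonempty (M ≃ₗ[Polynomial L]
      (Polynomial L ⧸ Submodule.span (Polynomial L) {f}))) :
    (∃ Λ : Submodule ↥O M, Λ.FG ∧ (∃ (n : ℕ) (b : Module.Basis (Fin n) L M), ∀ i, b i ∈ Λ) ∧
      (fun m : M => (Polynomial.C (σ ^ r) * Polynomial.X ^ d : Polynomial L) • m) ''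
        (Λ : Set M) = (Λ : Set M)) ∧
    (0 < s → ∃ Λ : Submodule ↥O M, Λ.FG ∧
      (∃ (n : ℕ) (b : Module.Basis (Fin n) L M), ∀ i, b i ∈ Λ) ∧
      (fun m : M => (Polynomial.C (σ ^ r) * Polynomial.X ^ d : Polynomial L) • m) ''
        (Λ : Set M) = (Λ : Set M) ∧
      (Λ : Set M) ⊆ (fun m : M => (Polynomial.X : Polynomial L) • m) '' (Λ : Set M)) :=
  stmt14_general hcompat v hv0 hadd hmul O hO σ hσ f hmonic d hd hd0 s r hr hedge hiso
end
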